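/- arXiv:2005.11683 — 2 statements merged into one kernel-verified Lean document; each statement's English description precedes it below -/
import Mathlib

section
/- With (c*, a*)(ε) = (1/√2 + (3+2γ)ε/4 + O(ε^{3/2}), -(3+2γ)ε/(4√2) + O(ε^{3/2})), the stability condition c*εγ > -a* holds for all sufficiently small ε > 0 if and only if γ > 3/2. -/
/-!
Dividing the stability condition `c ε γ > -a ε` by `ε` gives `c ε γ + a ε / ε > 0`, and along
`ε → 0⁺` the left side tends to `γ / √2 - (3 + 2γ) / (4√2) = (2γ - 3) / (4√2)`. If `γ > 3/2` this
limit is positive, whatever the `O(ε^{3/2})` remainders. If `γ ≤ 3/2`, taking `c*` exact and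
`a* = -(3 + 2γ) ε / (4√2) - ε^{3/2}` makes the quotient at most `(3 + 2γ) γ ε / 4 - √ε`, which is
negative for small `ε`.
-/

open Filter Topology Set

lemma eventually_nhdsGT_iff_exists_forall {α : Type*} [TopologicalSpace α] [LinearOrder α]
    [OrderTopology α] [NoMaxOrder α] {a : α} {p : α → Prop} :
    (∀ᶠ x in 𝓝[>] a, p x) ↔ ∃ b > a, ∀ x, a < x → x < b → p x := by
  simp only [(nhdsGT_basis a).eventually_iff, mem_Ioo, and_imp, gt_iff_lt]

lemma tendsto_of_eventually_abs_sub_le {α : Type*} {l : Filter α} {f g b : α → ℝ} {x : ℝ}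
    (hg : Tendsto g l (𝓝 x)) (hb : Tendsto b l (𝓝 0)) (h : ∀ᶠ a in l, |f a - g a| ≤ b a) :
    Tendsto f l (𝓝 x) := by
  simpa using (squeeze_zero_norm' h hb).add hg

lemma tendsto_rpow_nhdsGT_zero {p : ℝ} (hp : 0 < p) (C : ℝ) :
    Tendsto (fun ε : ℝ => C * ε ^ p) (𝓝[>] 0) (𝓝 0) := by
  simpa using ((tendsto_nhdsWithin_of_tendsto_nhds tendsto_id).rpow_const_nhds_zero hp).const_mul C

lemma tendsto_nhdsGT_zero_of_abs_sub_le_rpow {f : ℝ → ℝ} {c₀ k C ε₁ p : ℝ} (hp : 0 < p)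
    (hε₁ : 0 < ε₁) (h : ∀ ε ∈ Ioo 0 ε₁, |f ε - (c₀ + k * ε)| ≤ C * ε ^ p) :
    Tendsto f (𝓝[>] 0) (𝓝 c₀) := by
  have hlin : Tendsto (fun ε : ℝ => c₀ + k * ε) (𝓝[>] 0) (𝓝 c₀) :=
    tendsto_nhdsWithin_of_tendsto_nhds <|
      (show Continuous fun ε : ℝ => c₀ + k * ε by fun_prop).tendsto' 0 c₀ (by simp)
  exact tendsto_of_eventually_abs_sub_le hlin (tendsto_rpow_nhdsGT_zero hp C)
    ((nhdsGT_basis 0).eventually_iff.2 ⟨ε₁, hε₁, h⟩)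

lemma tendsto_div_nhdsGT_zero_of_abs_sub_le_rpow {f : ℝ → ℝ} {a₁ C ε₁ p : ℝ} (hp : 1 < p)
    (hε₁ : 0 < ε₁) (h : ∀ ε ∈ Ioo 0 ε₁, |f ε - a₁ * ε| ≤ C * ε ^ p) :
    Tendsto (fun ε => f ε / ε) (𝓝[>] 0) (𝓝 a₁) := by
  refine tendsto_of_eventually_abs_sub_le tendsto_const_nhds
    (tendsto_rpow_nhdsGT_zero (sub_pos.2 hp) C) ?_
  filter_upwards [(nhdsGT_basis 0).eventually_iff.2 ⟨ε₁, hε₁, h⟩, self_mem_nhdsWithin]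
    with ε hbound (hε : 0 < ε)
  calc |f ε / ε - a₁| = |f ε - a₁ * ε| / ε := by
        rw [← abs_of_pos hε, ← abs_div, abs_of_pos hε, sub_div, mul_div_cancel_right₀ _ hε.ne']
    _ ≤ C * ε ^ p / ε := by gcongr
    _ = C * ε ^ (p - 1) := by rw [Real.rpow_sub_one hε.ne', mul_div_assoc]

lemma eventually_stable_of_tendsto {c a : ℝ → ℝ} {c₀ a₁ γ : ℝ}
    (hc : Tendsto c (𝓝[>] 0) (𝓝 c₀)) (ha : Tendsto (fun ε => a ε / ε) (𝓝[>] 0) (𝓝 a₁))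
    (h : 0 < c₀ * γ + a₁) : ∀ᶠ ε in 𝓝[>] 0, c ε * ε * γ > -a ε := by
  have hlim : Tendsto (fun ε => c ε * γ + a ε / ε) (𝓝[>] 0) (𝓝 (c₀ * γ + a₁)) :=
    (hc.mul_const γ).add ha
  filter_upwards [hlim.eventually (lt_mem_nhds h), self_mem_nhdsWithin] with ε hpos (hε : 0 < ε)
  have : c ε * ε * γ + a ε = ε * (c ε * γ + a ε / ε) := by field_simp
  nlinarith [mul_pos hε hpos]

lemma pos_of_eventually_stable {c₀ k a₁ γ : ℝ}
    (h : ∀ᶠ ε in 𝓝[>] 0, (c₀ + k * ε) * ε * γ > -(a₁ * ε - ε ^ (3 / 2 : ℝ))) :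
    0 < c₀ * γ + a₁ := by
  have hsqrt : Tendsto (fun ε => k * γ * √ε) (𝓝[>] 0) (𝓝 0) :=
    tendsto_nhdsWithin_of_tendsto_nhds <|
      (show Continuous fun ε => k * γ * √ε by fun_prop).tendsto' 0 0 (by simp)
  obtain ⟨ε, hstab, hsmall, hε : 0 < ε⟩ :=
    (h.and ((hsqrt.eventually (gt_mem_nhds one_pos)).and self_mem_nhdsWithin)).exists
  have h32 : ε ^ (3 / 2 : ℝ) = ε * √ε := by
    rw [show (3 / 2 : ℝ) = 1 + 1 / 2 by norm_num, Real.rpow_add hε, Real.rpow_one,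
      ← Real.sqrt_eq_rpow]
  rw [h32] at hstab
  have ht : 0 < √ε := Real.sqrt_pos.2 hε
  have htt : √ε * √ε = ε := Real.mul_self_sqrt hε.le
  have hgap : 0 < ε * (√ε * (1 - k * γ * √ε)) := mul_pos hε (mul_pos ht (sub_pos.2 hsmall))
  have hprod : 0 < ε * (c₀ * γ + a₁) := by linear_combination hstab + hgap - k * γ * ε * htt
  exact pos_of_mul_pos_right hprod hε.le

lemma leading_margin_pos_iff (γ : ℝ) :
    0 < 1 / √2 * γ + -(3 + 2 * γ) / (4 * √2) ↔ 3 / 2 < γ := by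
  have : 1 / √2 * γ + -(3 + 2 * γ) / (4 * √2) = (2 * γ - 3) / (4 * √2) := by
    field_simp; ring
  rw [this, div_pos_iff_of_pos_right (by positivity)]
  constructor <;> intro <;> linarith

theorem stmt_11_general (γ : ℝ) :
    (∀ cst ast : ℝ → ℝ,
      (∃ C ε₁ : ℝ, 0 < C ∧ 0 < ε₁ ∧ ∀ ε ∈ Set.Ioo (0:ℝ) ε₁,
        |cst ε - (1 / Real.sqrt 2 + (3 + 2 * γ) / 4 * ε)| ≤ C * ε ^ ((3:ℝ)/2) ∧
        |ast ε - (-(3 + 2 * γ) / (4 * Real.sqrt 2) * ε)| ≤ C * ε ^ ((3:ℝ)/2)) →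
      ∃ ε₀ > (0:ℝ), ∀ ε : ℝ, 0 < ε → ε < ε₀ → cst ε * ε * γ > -(ast ε))
    ↔ γ > 3/2 := by
  rw [gt_iff_lt, ← leading_margin_pos_iff]
  constructor
  · intro h
    refine pos_of_eventually_stable (k := (3 + 2 * γ) / 4) <|
      eventually_nhdsGT_iff_exists_forall.2 <|
        h _ (fun ε => -(3 + 2 * γ) / (4 * √2) * ε - ε ^ (3 / 2 : ℝ))
          ⟨1, 1, one_pos, one_pos, fun ε hε => ?_⟩
    have := Real.rpow_nonneg hε.1.le (3 / 2 : ℝ)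
    simp [abs_of_nonneg this, this]
  · rintro hγ cst ast ⟨C, ε₁, -, hε₁, hbound⟩
    refine eventually_nhdsGT_iff_exists_forall.1 (eventually_stable_of_tendsto ?_ ?_ hγ)
    · exact tendsto_nhdsGT_zero_of_abs_sub_le_rpow (by norm_num) hε₁ fun ε hε => (hbound ε hε).1
    · exact tendsto_div_nhdsGT_zero_of_abs_sub_le_rpow (by norm_num) hε₁ fun ε hε => (hbound ε hε).2

/-- With (c*, a*)(ε) = (1/√2 + (3+2γ)ε/4 + O(ε^{3/2}), -(3+2γ)ε/(4√2) + O(ε^{3/2})),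
the stability condition c*εγ > -a* holds for all sufficiently small ε > 0 (for every
choice of the O(ε^{3/2}) remainders) iff γ > 3/2. -/
theorem stmt_11 (γ : ℝ) (hγ : 0 < γ) :
    (∀ cst ast : ℝ → ℝ,
      (∃ C ε₁ : ℝ, 0 < C ∧ 0 < ε₁ ∧ ∀ ε ∈ Set.Ioo (0:ℝ) ε₁,
        |cst ε - (1 / Real.sqrt 2 + (3 + 2 * γ) / 4 * ε)| ≤ C * ε ^ ((3:ℝ)/2) ∧
        |ast ε - (-(3 + 2 * γ) / (4 * Real.sqrt 2) * ε)| ≤ C * ε ^ ((3:ℝ)/2)) →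
      ∃ ε₀ > (0:ℝ), ∀ ε : ℝ, 0 < ε → ε < ε₀ → cst ε * ε * γ > -(ast ε))
    ↔ γ > 3/2 :=
  stmt_11_general γ
end

section
/- Define λ_max : (w_A^-(0,0), 8/27 - w_A^-(0,0)) → (0, 5/24] by λ_max(s) = λ_{max,ℓ}(s) for s ∈ (w_A^-(0,0), 2/27), λ_max(s) = 5/24 for s ∈ [2/27, 2/9], and λ_max(s) = λ_{max,r}(s) for s ∈ (2/9, 8/27 - w_A^-(0,0)), where w_A^-(λ,0) = f(1/3 - √(10-48λ)/12) with f(u) = u²(1-u), λ_{max,ℓ} is the inverse of s ↦ w_A^-(s,0) and λ_{max,r}(s) = λ_{max,ℓ}(8/27 - s). Then λ_max is well defined (w_A^-(·,0) is injective on [0, 5/24]), satisfies the symmetry λ_max(s) = λ_max(8/27 - s), and w_A^-(0,0) = (64 - 19√10)/864, w_A^-(5/24,0) = 2/27. -/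
/-!
Writing `w_A⁻(λ,0) = f (g λ)` with `g λ = 1/3 - √(10 - 48λ)/12`, the inner map `g` is strictly
increasing on `[0, 5/24]` with values in `[0, 1/3]`, where the cubic `f u = u²(1 - u)` is strictly
increasing (`f' = u(2 - 3u) > 0` on `(0, 2/3)`). So `w_A⁻(·,0)` is a continuous increasing
bijection of `[0, 5/24]` onto `[w_A⁻(0,0), 2/27]`, and the intermediate value theorem provides its
inverse `λ_{max,ℓ}`. The symmetry of `λ_max` is a purely formal property of gluing a function
on the left of `[2/27, 2/9]` with its mirror image under `s ↦ 8/27 - s` on the right.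
-/

open Set

theorem cubic_strictMonoOn : StrictMonoOn (fun u : ℝ => u ^ 2 * (1 - u)) (Icc 0 (2 / 3)) := by
  intro a ⟨ha0, ha1⟩ b ⟨_, hb1⟩ hab
  have hsum : a ^ 2 + a * b + b ^ 2 < a + b := by
    nlinarith [mul_nonneg ha0 (by linarith : (0:ℝ) ≤ 2 / 3 - a),
      mul_pos (sub_pos.2 hab) (sub_pos.2 hab)]
  show a ^ 2 * (1 - a) < b ^ 2 * (1 - b)
  nlinarith [mul_pos (sub_pos.2 hab) (sub_pos.2 hsum)]

theorem strictMonoOn_sub_sqrt :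
    StrictMonoOn (fun lam : ℝ => 1 / 3 - Real.sqrt (10 - 48 * lam) / 12) (Iic (5 / 24)) := by
  intro a _ b hb hab
  have : Real.sqrt (10 - 48 * b) < Real.sqrt (10 - 48 * a) :=
    Real.sqrt_lt_sqrt (by linarith [mem_Iic.1 hb]) (by linarith)
  show 1 / 3 - Real.sqrt (10 - 48 * a) / 12 < 1 / 3 - Real.sqrt (10 - 48 * b) / 12
  linarith

theorem mapsTo_sub_sqrt :
    MapsTo (fun lam : ℝ => 1 / 3 - Real.sqrt (10 - 48 * lam) / 12) (Icc 0 (5 / 24))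
      (Icc 0 (2 / 3)) := by
  intro lam ⟨hlam0, _⟩
  have hle : Real.sqrt (10 - 48 * lam) ≤ 4 :=
    Real.sqrt_le_iff.2 ⟨by norm_num, by linarith⟩
  exact ⟨by linarith, by linarith [Real.sqrt_nonneg (10 - 48 * lam)]⟩

noncomputable def mirrorPiecewise (a b c m : ℝ) (L : ℝ → ℝ) (s : ℝ) : ℝ :=
  if s < a then L s else if s ≤ b then m else L (c - s)

theorem mirrorPiecewise_sub_eq {a b c : ℝ} (m : ℝ) (L : ℝ → ℝ) (hab : a ≤ b) (hc : a + b = c)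
    (s : ℝ) : mirrorPiecewise a b c m L (c - s) = mirrorPiecewise a b c m L s := by
  unfold mirrorPiecewise
  rcases lt_or_ge s a with hsa | hsa
  · rw [if_neg (by linarith), if_neg (by linarith), if_pos hsa, sub_sub_cancel]
  rcases le_or_gt s b with hsb | hsb
  · rw [if_neg (by linarith), if_pos (by linarith), if_neg (not_lt.2 hsa), if_pos hsb]
  · rw [if_pos (by linarith), if_neg (not_lt.2 hsa), if_neg (not_le.2 hsb)]

theorem mirrorPiecewise_mem {a b c m w : ℝ} {L : ℝ → ℝ} {T : Set ℝ} (hc : a + b = c)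
    (hL : ∀ s ∈ Ioo w a, L s ∈ T) (hm : m ∈ T) {s : ℝ} (hs : s ∈ Ioo w (c - w)) :
    mirrorPiecewise a b c m L s ∈ T := by
  unfold mirrorPiecewise
  split_ifs with hsa hsb
  · exact hL s ⟨hs.1, hsa⟩
  · exact hm
  · exact hL (c - s) ⟨by linarith [hs.2], by linarith⟩

/-- With f(u) = u²(1-u) and w_A⁻(λ,0) = f(1/3 - √(10-48λ)/12): w_A⁻(·,0) is injective on
[0, 5/24], w_A⁻(0,0) = (64-19√10)/864, w_A⁻(5/24,0) = 2/27; there is an inverse λ_{max,ℓ},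
and the piecewise function λ_max (with λ_{max,r}(s) = λ_{max,ℓ}(8/27-s)) maps
(w_A⁻(0,0), 8/27 - w_A⁻(0,0)) into (0, 5/24] and satisfies λ_max(s) = λ_max(8/27-s). -/
theorem stmt_16 :
    let f : ℝ → ℝ := fun u => u ^ 2 * (1 - u)
    let wA : ℝ → ℝ := fun lam => f (1/3 - Real.sqrt (10 - 48 * lam) / 12)
    Set.InjOn wA (Set.Icc 0 (5/24)) ∧
    wA 0 = (64 - 19 * Real.sqrt 10) / 864 ∧
    wA (5/24) = 2/27 ∧
    ∃ lamℓ : ℝ → ℝ,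
      (∀ s ∈ Set.Icc (wA 0) (2/27), lamℓ s ∈ Set.Icc (0:ℝ) (5/24) ∧ wA (lamℓ s) = s) ∧
      (let lamMax : ℝ → ℝ := fun s =>
          if s < 2/27 then lamℓ s else if s ≤ 2/9 then 5/24 else lamℓ (8/27 - s)
       (∀ s ∈ Set.Ioo (wA 0) (8/27 - wA 0), lamMax s ∈ Set.Ioc (0:ℝ) (5/24)) ∧
       (∀ s ∈ Set.Ioo (wA 0) (8/27 - wA 0), lamMax s = lamMax (8/27 - s))) := by
  intro f wA
  have hmono : StrictMonoOn wA (Icc 0 (5 / 24)) :=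
    cubic_strictMonoOn.comp (strictMonoOn_sub_sqrt.mono Icc_subset_Iic_self) mapsTo_sub_sqrt
  have hw0 : wA 0 = (64 - 19 * Real.sqrt 10) / 864 := by
    show (1/3 - Real.sqrt (10 - 48 * 0) / 12) ^ 2 * (1 - (1/3 - Real.sqrt (10 - 48 * 0) / 12)) = _
    rw [mul_zero, sub_zero]
    linear_combination (Real.sqrt 10 / 1728) * Real.sq_sqrt (by norm_num : (0:ℝ) ≤ 10)
  have hw524 : wA (5 / 24) = 2 / 27 := by
    show (1/3 - Real.sqrt (10 - 48 * (5/24)) / 12) ^ 2 *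
        (1 - (1/3 - Real.sqrt (10 - 48 * (5/24)) / 12)) = 2/27
    norm_num
  have hsurj : SurjOn wA (Icc 0 (5 / 24)) (Icc (wA 0) (2 / 27)) := by
    rw [← hw524]
    exact intermediate_value_Icc (by norm_num) (by fun_prop)
  set lamℓ := Function.invFunOn wA (Icc 0 (5 / 24))
  have hlamℓ_pos : ∀ s ∈ Ioo (wA 0) (2 / 27), lamℓ s ∈ Ioc 0 (5 / 24) := fun s hs => by
    have hs' : s ∈ Icc (wA 0) (2 / 27) := Ioo_subset_Icc_self hs
    obtain ⟨hpos, hle⟩ := hsurj.mapsTo_invFunOn hs'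
    refine ⟨hpos.lt_of_ne fun h => hs.1.ne ?_, hle⟩
    rw [h]
    exact hsurj.rightInvOn_invFunOn hs'
  refine ⟨hmono.injOn, hw0, hw524, lamℓ,
    fun s hs => ⟨hsurj.mapsTo_invFunOn hs, hsurj.rightInvOn_invFunOn hs⟩,
    fun s hs => mirrorPiecewise_mem (b := 2 / 9) (by norm_num) hlamℓ_pos (by norm_num) hs,
    fun s _ => (mirrorPiecewise_sub_eq (5 / 24) lamℓ (by norm_num) (by norm_num) s).symm⟩
end
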